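/- Let z ∈ A^Γ be a proper landscape and B ∈ I_z a labeled ball of radius m. Then there exists a proper landscape x' in the orbit closure of z such that B ∈ K_{x'} and H(x'(e)) = 1; that is, B is never realized as a window of x', and x' has height 1 at the identity. -/

import Mathlib

open scoped Pointwise

/-- Word metric of the (right) Cayley graph `Cay(Γ, S)` (right-invariant). -/
noncomputable def wordDist {Γ : Type*} [Group Γ] (S : Set Γ) (γ δ : Γ) : ℕ :=
  sInf {n | ∃ l : List Γ, (∀ s ∈ l, s ∈ S) ∧ l.length = n ∧ l.prod * γ = δ}

/-- `A = {0,1}^ℕ × (ℕ ∪ {∞})`, with `ℕ ∪ {∞}` the one-point compactification of `ℕ`. -/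
abbrev CantorHeightSpace : Type := (ℕ → Bool) × OnePoint ℕ

/-- The translation action `L_γ(x)(δ) = x(δγ)` on `A^Γ`. -/
def Lact {Γ : Type*} [Group Γ] (γ : Γ) (x : Γ → CantorHeightSpace) : Γ → CantorHeightSpace :=
  fun δ => x (δ * γ)

/-- Orbit closure in the product topology on `A^Γ`. -/
def orbitClosure {Γ : Type*} [Group Γ] (y : Γ → CantorHeightSpace) :
    Set (Γ → CantorHeightSpace) :=
  closure {x | ∃ γ : Γ, x = Lact γ y}

/-- An element of `A^Γ` is of totally finite height if no height coordinate is `∞`. -/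
def TotallyFinite {Γ : Type*} [Group Γ] (x : Γ → CantorHeightSpace) : Prop :=
  ∀ γ : Γ, (x γ).2 ≠ OnePoint.infty

/-- The labeled ball (window) `Θ^m_x(γ)`: it records, for each `δ` in the ball of radius `m`
around the identity, the `m`-truncated Cantor coordinate and the height of `x` at `δγ`. -/
def window {Γ : Type*} [Group Γ] (d : Γ → Γ → ℕ) (m : ℕ) (x : Γ → CantorHeightSpace)
    (γ : Γ) : Γ → Option CantorHeightSpace := fun δ =>
  if d 1 δ ≤ m then
    some (fun i => if i < m then (x (δ * γ)).1 i else false, (x (δ * γ)).2)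
  else none

/-- The `z`-local set `(Θ^m_z)^{-1}(S)` determined by a set `S` of labeled balls. -/
def localSet {Γ : Type*} [Group Γ] (d : Γ → Γ → ℕ) (m : ℕ) (z : Γ → CantorHeightSpace)
    (S : Set (Γ → Option CantorHeightSpace)) : Set Γ :=
  {γ | window d m z γ ∈ S}

/-- A proper Cantor labeling. -/
def IsProperCantorLabeling {Γ : Type*} [Group Γ] (d : Γ → Γ → ℕ) (lab : Γ → ℕ → Bool) :
    Prop :=
  ∀ r : ℕ, 0 < r → ∃ Sr : ℕ, 0 < Sr ∧ ∀ γ δ : Γ, 0 < d γ δ → d γ δ ≤ r →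
    ∃ i < Sr, lab γ i ≠ lab δ i

/-- The four landscape conditions for an element of totally finite height. -/
def IsLandscape {Γ : Type*} [Group Γ] (d : Γ → Γ → ℕ) (z : Γ → CantorHeightSpace) : Prop :=
  TotallyFinite z ∧
  (∀ γ δ : Γ, ∀ a b : ℕ, d γ δ = 1 → (z γ).2 = (a : OnePoint ℕ) →
    (z δ).2 = (b : OnePoint ℕ) → |(a : ℤ) - (b : ℤ)| ≤ 1) ∧
  (∀ n : ℕ, 1 ≤ n → ∃ M : ℕ, 1 < M ∧ ∀ γ : Γ, (z γ).2 = (n : OnePoint ℕ) →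
    ∃ δ : Γ, d δ γ ≤ M ∧ (z δ).2 = ((1 : ℕ) : OnePoint ℕ)) ∧
  (∀ l : ℕ, 1 ≤ l → ∃ N : ℕ, 1 < N ∧ ∀ γ : Γ, (z γ).2 = ((1 : ℕ) : OnePoint ℕ) →
    l ≤ {δ : Γ | d γ δ ≤ N ∧ (z δ).2 = ((1 : ℕ) : OnePoint ℕ)}.ncard) ∧
  (∀ m : ℕ, 1 ≤ m → ∃ Sm : ℕ, 1 < Sm ∧ ∀ δ : Γ, ∃ κ : Γ, d δ κ ≤ Sm ∧
    ∃ h : ℕ, m ≤ h ∧ (z κ).2 = (h : OnePoint ℕ))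

/-- A proper landscape: a landscape whose Cantor coordinates form a proper Cantor
labeling. -/
def IsProperLandscape {Γ : Type*} [Group Γ] (d : Γ → Γ → ℕ) (z : Γ → CantorHeightSpace) :
    Prop :=
  IsLandscape d z ∧ IsProperCantorLabeling d (fun γ => (z γ).1)

/-- `K_x`: the labeled balls (of radius `B.1`) never realized as a window of `x`. -/
def Kset {Γ : Type*} [Group Γ] (d : Γ → Γ → ℕ) (x : Γ → CantorHeightSpace) :
    Set (ℕ × (Γ → Option CantorHeightSpace)) :=
  {B | ∀ γ : Γ, window d B.1 x γ ≠ B.2}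

/-- `J_x`: the labeled balls realized within a uniformly bounded distance of every
height-one point of `x`. -/
def Jset {Γ : Type*} [Group Γ] (d : Γ → Γ → ℕ) (x : Γ → CantorHeightSpace) :
    Set (ℕ × (Γ → Option CantorHeightSpace)) :=
  {B | ∃ KB : ℕ, ∀ γ : Γ, (x γ).2 = ((1 : ℕ) : OnePoint ℕ) →
    ∃ δ : Γ, d δ γ ≤ KB ∧ window d B.1 x δ = B.2}

/-- `I_x = ℬ \ (K_x ∪ J_x)`. -/
def Iset {Γ : Type*} [Group Γ] (d : Γ → Γ → ℕ) (x : Γ → CantorHeightSpace) :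
    Set (ℕ × (Γ → Option CantorHeightSpace)) :=
  (Kset d x ∪ Jset d x)ᶜ

/-!
Since `B ∉ J_z`, there are height-one points `g k` of `z` with no realization of `B` within
distance `k` of `g k`. By compactness of `A^Γ`, the translates `L_{g k} z` converge to some `x'`
along an ultrafilter finer than `atTop`. Heights are 1-Lipschitz, so the heights of `L_{g k} z`
at a fixed `δ` stay below `1 + |δ|`; hence no height of `x'` is `∞`, and every finite pattern of
`x'` (heights and finitely many Cantor digits on a finite set) occurs in `z`. The landscape and
properness conditions only constrain finite patterns, so they pass to `x'`. A realization of
`B` in `x'` at `γ` would be one in `z` at `γ g k` for large `k`, at distance `|γ| ≤ k` from `g k`.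
-/

open Filter Topology

section WordMetric

variable {Γ : Type*} [Group Γ] {S : Set Γ}

lemma exists_list_prod_eq (hSsym : ∀ s ∈ S, s⁻¹ ∈ S) (hSgen : Subgroup.closure S = ⊤)
    (g : Γ) : ∃ l : List Γ, (∀ s ∈ l, s ∈ S) ∧ l.prod = g := by
  have hg : g ∈ Submonoid.closure (S ∪ S⁻¹) := by
    rw [← Subgroup.closure_toSubmonoid, hSgen]; trivial
  obtain ⟨l, hl, rfl⟩ := Submonoid.exists_list_of_mem_closure hg
  refine ⟨l, fun s hs => ?_, rfl⟩
  rcases hl s hs with h | h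
  exacts [h, by simpa using hSsym _ h]

lemma wordDist_spec (hSsym : ∀ s ∈ S, s⁻¹ ∈ S) (hSgen : Subgroup.closure S = ⊤) (γ δ : Γ) :
    ∃ l : List Γ, (∀ s ∈ l, s ∈ S) ∧ l.length = wordDist S γ δ ∧ l.prod * γ = δ := by
  obtain ⟨l, hl, hprod⟩ := exists_list_prod_eq hSsym hSgen (δ * γ⁻¹)
  exact Nat.sInf_mem (s := {n | ∃ l : List Γ, (∀ s ∈ l, s ∈ S) ∧ l.length = n ∧ l.prod * γ = δ})
    ⟨l.length, l, hl, rfl, by rw [hprod, inv_mul_cancel_right]⟩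

lemma wordDist_le {l : List Γ} (hl : ∀ s ∈ l, s ∈ S) {γ δ : Γ} (hprod : l.prod * γ = δ) :
    wordDist S γ δ ≤ l.length :=
  Nat.sInf_le ⟨l, hl, rfl, hprod⟩

lemma wordDist_self (γ : Γ) : wordDist S γ γ = 0 :=
  Nat.le_zero.1 (wordDist_le (l := []) (by simp) (by simp))

lemma wordDist_mul_right (g γ δ : Γ) : wordDist S (γ * g) (δ * g) = wordDist S γ δ := by
  simp only [wordDist, ← mul_assoc, mul_left_inj]

lemma wordDist_mul_inv_right (g γ δ : Γ) :
    wordDist S γ (δ * g⁻¹) = wordDist S (γ * g) δ := by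
  rw [← wordDist_mul_right g, inv_mul_cancel_right]

lemma wordDist_comm (hSsym : ∀ s ∈ S, s⁻¹ ∈ S) (hSgen : Subgroup.closure S = ⊤) (γ δ : Γ) :
    wordDist S γ δ = wordDist S δ γ := by
  have key : ∀ a b : Γ, wordDist S b a ≤ wordDist S a b := by
    intro a b
    obtain ⟨l, hl, hlen, hprod⟩ := wordDist_spec hSsym hSgen a b
    have hl' : ∀ s ∈ (l.map (·⁻¹)).reverse, s ∈ S := by
      simp only [List.mem_reverse, List.mem_map]
      rintro _ ⟨t, ht, rfl⟩
      exact hSsym t (hl t ht)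
    have hprod' : (l.map (·⁻¹)).reverse.prod * b = a := by
      rw [← List.prod_inv_reverse, ← hprod, inv_mul_cancel_left]
    simpa [hlen] using wordDist_le hl' hprod'
  exact le_antisymm (key δ γ) (key γ δ)

lemma eq_of_wordDist_eq_zero (hSsym : ∀ s ∈ S, s⁻¹ ∈ S) (hSgen : Subgroup.closure S = ⊤)
    {γ δ : Γ} (h : wordDist S γ δ = 0) : γ = δ := by
  obtain ⟨l, -, hlen, hprod⟩ := wordDist_spec hSsym hSgen γ δ
  rw [h, List.length_eq_zero_iff] at hlen
  simpa [hlen] using hprod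

lemma wordDist_mul_left_le_one {s : Γ} (hs : s ∈ S) (γ : Γ) : wordDist S γ (s * γ) ≤ 1 :=
  wordDist_le (l := [s]) (by simpa using hs) (by simp)

lemma finite_setOf_wordDist_le (hSfin : S.Finite) (hSsym : ∀ s ∈ S, s⁻¹ ∈ S)
    (hSgen : Subgroup.closure S = ⊤) (γ : Γ) (R : ℕ) : {δ | wordDist S γ δ ≤ R}.Finite := by
  have : Finite S := hSfin
  refine ((List.finite_length_le S R).image fun l => (l.map (↑)).prod * γ).subset ?_
  intro δ hδ
  obtain ⟨l, hl, hlen, hprod⟩ := wordDist_spec hSsym hSgen γ δ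
  lift l to List S using hl
  exact ⟨l, by simpa [← hlen] using hδ, hprod⟩

end WordMetric

section Heights

variable {Γ : Type*} [Group Γ] {S : Set Γ} {z : Γ → CantorHeightSpace}

lemma IsLandscape.height_mul_le (hSsym : ∀ s ∈ S, s⁻¹ ∈ S) (hSgen : Subgroup.closure S = ⊤)
    (hz : IsLandscape (wordDist S) z) {s : Γ} (hs : s ∈ S) {α : Γ} {a b : ℕ}
    (ha : (z α).2 = a) (hb : (z (s * α)).2 = b) : b ≤ a + 1 := by
  rcases Nat.le_one_iff_eq_zero_or_eq_one.1 (wordDist_mul_left_le_one hs α) with h0 | h1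
  · rw [← eq_of_wordDist_eq_zero hSsym hSgen h0, ha, OnePoint.coe_eq_coe] at hb
    omega
  · have := abs_le.1 (hz.2.1 _ _ a b h1 ha hb)
    omega

lemma IsLandscape.height_le_add_length (hSsym : ∀ s ∈ S, s⁻¹ ∈ S)
    (hSgen : Subgroup.closure S = ⊤) (hz : IsLandscape (wordDist S) z) {l : List Γ}
    (hl : ∀ s ∈ l, s ∈ S) {α : Γ} {a b : ℕ} (ha : (z α).2 = a)
    (hb : (z (l.prod * α)).2 = b) : b ≤ a + l.length := by
  induction l generalizing b with
  | nil =>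
    rw [List.prod_nil, one_mul, ha, OnePoint.coe_eq_coe] at hb
    omega
  | cons s l ih =>
    obtain ⟨c, hc⟩ := OnePoint.ne_infty_iff_exists.1 (hz.1 (l.prod * α))
    have hcb := ih (fun t ht => hl t (List.mem_cons_of_mem _ ht)) hc.symm
    rw [List.prod_cons, mul_assoc] at hb
    have := hz.height_mul_le hSsym hSgen (hl s List.mem_cons_self) hc.symm hb
    simp only [List.length_cons]
    omega

lemma IsLandscape.height_le_add_wordDist (hSsym : ∀ s ∈ S, s⁻¹ ∈ S)
    (hSgen : Subgroup.closure S = ⊤) (hz : IsLandscape (wordDist S) z) {α β : Γ} {a b : ℕ}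
    (ha : (z α).2 = a) (hb : (z β).2 = b) : b ≤ a + wordDist S α β := by
  obtain ⟨l, hl, hlen, rfl⟩ := wordDist_spec hSsym hSgen α β
  exact hlen ▸ hz.height_le_add_length hSsym hSgen hl ha hb

end Heights

lemma OnePoint.eventually_eq_of_tendsto {X ι : Type*} [TopologicalSpace X] [DiscreteTopology X]
    {F : Filter ι} [F.NeBot] {f : ι → OnePoint X} {a : OnePoint X} (h : Tendsto f F (𝓝 a))
    {s : Set X} (hs : s.Finite) (hf : ∀ᶠ k in F, f k ∈ (↑) '' s) :
    ∀ᶠ k in F, f k = a := by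
  obtain ⟨x, -, rfl⟩ := (hs.image _).isClosed.mem_of_tendsto h hf
  rw [OnePoint.nhds_coe_eq, nhds_discrete, Filter.map_pure] at h
  exact tendsto_pure.1 h

def AgreeOn {Γ : Type*} (T : Set Γ) (n : ℕ) (x y : Γ → CantorHeightSpace) : Prop :=
  ∀ δ ∈ T, (x δ).2 = (y δ).2 ∧ ∀ i < n, (x δ).1 i = (y δ).1 i

lemma eventually_agreeOn_of_tendsto {Γ ι : Type*} {F : Filter ι} [F.NeBot]
    {y : ι → Γ → CantorHeightSpace} {x : Γ → CantorHeightSpace} (h : Tendsto y F (𝓝 x))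
    (hbdd : ∀ δ, ∃ N : ℕ, ∀ᶠ k in F, ∃ n ≤ N, (y k δ).2 = n) {T : Set Γ} (hT : T.Finite)
    (n : ℕ) : ∀ᶠ k in F, AgreeOn T n x (y k) := by
  refine (eventually_all_finite hT).2 fun δ _ => ?_
  have hδ : Tendsto (fun k => y k δ) F (𝓝 (x δ)) := tendsto_pi_nhds.1 h δ
  obtain ⟨N, hN⟩ := hbdd δ
  have hheight := (OnePoint.eventually_eq_of_tendsto ((continuous_snd.tendsto _).comp hδ)
    (Set.finite_Iic N) (hN.mono fun k ⟨n, hn, hk⟩ => ⟨n, hn, hk.symm⟩))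
  have hdigits : ∀ᶠ k in F, ∀ i ∈ Set.Iio n, (y k δ).1 i = (x δ).1 i := by
    refine (eventually_all_finite (Set.finite_Iio n)).2 fun i _ => ?_
    have hi := (((continuous_apply i).comp continuous_fst).tendsto _).comp hδ
    rw [nhds_discrete] at hi
    exact tendsto_pure.1 hi
  filter_upwards [hheight, hdigits] with k hk hk'
  exact ⟨hk.symm, fun i hi => (hk' i hi).symm⟩

lemma IsLandscape.exists_tendsto_translates {Γ : Type*} [Group Γ] {S : Set Γ}
    {z : Γ → CantorHeightSpace} (hSsym : ∀ s ∈ S, s⁻¹ ∈ S) (hSgen : Subgroup.closure S = ⊤)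
    (hz : IsLandscape (wordDist S) z) {ι : Type*} (F : Filter ι) [F.NeBot] (g : ι → Γ)
    (hg : ∀ k, (z (g k)).2 = ((1 : ℕ) : OnePoint ℕ)) :
    ∃ (x : Γ → CantorHeightSpace) (U : Ultrafilter ι), ↑U ≤ F ∧
      Tendsto (fun k => Lact (g k) z) U (𝓝 x) ∧
      ∀ T : Set Γ, T.Finite → ∀ n, ∀ᶠ k in U, AgreeOn T n x (Lact (g k) z) := by
  obtain ⟨x, -, hx⟩ := isCompact_univ.exists_mapClusterPt (f := F)
    (u := fun k => Lact (g k) z) (by simp)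
  obtain ⟨U, hUF, hU⟩ := mapClusterPt_iff_ultrafilter.1 hx
  refine ⟨x, U, hUF, hU, fun T hT n => eventually_agreeOn_of_tendsto hU (fun δ => ?_) hT n⟩
  refine ⟨1 + wordDist S 1 δ, Eventually.of_forall fun k => ?_⟩
  obtain ⟨b, hb⟩ := OnePoint.ne_infty_iff_exists.1 (hz.1 (δ * g k))
  refine ⟨b, ?_, hb.symm⟩
  have hdist : wordDist S (g k) (δ * g k) = wordDist S 1 δ := by
    simpa using wordDist_mul_right (S := S) (g k) 1 δ
  simpa [hdist] using hz.height_le_add_wordDist hSsym hSgen (hg k) hb.symm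

section Transfer

variable {Γ : Type*}

/- The conjuncts of `IsLandscape` after `TotallyFinite`, in order. -/
def HeightLipschitz (d : Γ → Γ → ℕ) (z : Γ → CantorHeightSpace) : Prop :=
  ∀ γ δ : Γ, ∀ a b : ℕ, d γ δ = 1 → (z γ).2 = (a : OnePoint ℕ) →
    (z δ).2 = (b : OnePoint ℕ) → |(a : ℤ) - (b : ℤ)| ≤ 1

def HeightOneNear (d : Γ → Γ → ℕ) (z : Γ → CantorHeightSpace) : Prop :=
  ∀ n : ℕ, 1 ≤ n → ∃ M : ℕ, 1 < M ∧ ∀ γ : Γ, (z γ).2 = (n : OnePoint ℕ) →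
    ∃ δ : Γ, d δ γ ≤ M ∧ (z δ).2 = ((1 : ℕ) : OnePoint ℕ)

def HeightOneClustered (d : Γ → Γ → ℕ) (z : Γ → CantorHeightSpace) : Prop :=
  ∀ l : ℕ, 1 ≤ l → ∃ N : ℕ, 1 < N ∧ ∀ γ : Γ, (z γ).2 = ((1 : ℕ) : OnePoint ℕ) →
    l ≤ {δ : Γ | d γ δ ≤ N ∧ (z δ).2 = ((1 : ℕ) : OnePoint ℕ)}.ncard

def TallPointsDense (d : Γ → Γ → ℕ) (z : Γ → CantorHeightSpace) : Prop :=
  ∀ m : ℕ, 1 ≤ m → ∃ Sm : ℕ, 1 < Sm ∧ ∀ δ : Γ, ∃ κ : Γ, d δ κ ≤ Sm ∧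
    ∃ h : ℕ, m ≤ h ∧ (z κ).2 = (h : OnePoint ℕ)

variable [Group Γ]

def PatternsOccurIn (x z : Γ → CantorHeightSpace) : Prop :=
  ∀ T : Set Γ, T.Finite → ∀ n : ℕ, ∃ g : Γ, AgreeOn T n x (Lact g z)

variable {S : Set Γ} {x z : Γ → CantorHeightSpace}

lemma PatternsOccurIn.exists_agreeOn_ball (hSfin : S.Finite) (hSsym : ∀ s ∈ S, s⁻¹ ∈ S)
    (hSgen : Subgroup.closure S = ⊤) (hxz : PatternsOccurIn x z) (γ : Γ) (R n : ℕ) :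
    ∃ g : Γ, AgreeOn {δ | wordDist S γ δ ≤ R} n x (Lact g z) :=
  hxz _ (finite_setOf_wordDist_le hSfin hSsym hSgen γ R) n

lemma TotallyFinite.of_patternsOccurIn (hz : TotallyFinite z) (hxz : PatternsOccurIn x z) :
    TotallyFinite x := fun γ => by
  obtain ⟨g, hg⟩ := hxz {γ} (Set.finite_singleton γ) 0
  rw [(hg γ rfl).1]
  exact hz _

lemma HeightLipschitz.of_patternsOccurIn (hz : HeightLipschitz (wordDist S) z)
    (hxz : PatternsOccurIn x z) : HeightLipschitz (wordDist S) x := by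
  intro γ δ a b hγδ ha hb
  obtain ⟨g, hg⟩ := hxz {γ, δ} (Set.toFinite _) 0
  rw [(hg γ (by simp)).1] at ha
  rw [(hg δ (by simp)).1] at hb
  exact hz (γ * g) (δ * g) a b (by rwa [wordDist_mul_right]) ha hb

lemma HeightOneNear.of_patternsOccurIn (hSfin : S.Finite) (hSsym : ∀ s ∈ S, s⁻¹ ∈ S)
    (hSgen : Subgroup.closure S = ⊤) (hz : HeightOneNear (wordDist S) z)
    (hxz : PatternsOccurIn x z) : HeightOneNear (wordDist S) x := by
  intro n hn
  obtain ⟨M, hM, hnear⟩ := hz n hn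
  refine ⟨M, hM, fun γ hγ => ?_⟩
  obtain ⟨g, hg⟩ := hxz.exists_agreeOn_ball hSfin hSsym hSgen γ M 0
  rw [(hg γ (by simp [wordDist_self])).1] at hγ
  obtain ⟨δ, hδ, hδ1⟩ := hnear (γ * g) hγ
  have hball : wordDist S γ (δ * g⁻¹) ≤ M := by
    rwa [wordDist_mul_inv_right, wordDist_comm hSsym hSgen]
  refine ⟨δ * g⁻¹, by rwa [wordDist_comm hSsym hSgen], ?_⟩
  rw [(hg _ hball).1, Lact, inv_mul_cancel_right, hδ1]

lemma HeightOneClustered.of_patternsOccurIn (hSfin : S.Finite) (hSsym : ∀ s ∈ S, s⁻¹ ∈ S)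
    (hSgen : Subgroup.closure S = ⊤) (hz : HeightOneClustered (wordDist S) z)
    (hxz : PatternsOccurIn x z) : HeightOneClustered (wordDist S) x := by
  intro l hl
  obtain ⟨N, hN, hcluster⟩ := hz l hl
  refine ⟨N, hN, fun γ hγ => ?_⟩
  obtain ⟨g, hg⟩ := hxz.exists_agreeOn_ball hSfin hSsym hSgen γ N 0
  rw [(hg γ (by simp [wordDist_self])).1] at hγ
  have hsub : {δ | wordDist S (γ * g) δ ≤ N ∧ (z δ).2 = ((1 : ℕ) : OnePoint ℕ)} ⊆
      (· * g) '' {δ | wordDist S γ δ ≤ N ∧ (x δ).2 = ((1 : ℕ) : OnePoint ℕ)} := by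
    rintro δ ⟨hδ, hδ1⟩
    have hball : wordDist S γ (δ * g⁻¹) ≤ N := by rwa [wordDist_mul_inv_right]
    refine ⟨δ * g⁻¹, ⟨hball, ?_⟩, inv_mul_cancel_right δ g⟩
    rw [(hg _ hball).1, Lact, inv_mul_cancel_right, hδ1]
  have hfin : {δ | wordDist S γ δ ≤ N ∧ (x δ).2 = ((1 : ℕ) : OnePoint ℕ)}.Finite :=
    (finite_setOf_wordDist_le hSfin hSsym hSgen γ N).subset fun _ h => h.1
  calc l ≤ _ := hcluster (γ * g) hγ
    _ ≤ _ := Set.ncard_le_ncard hsub (hfin.image _)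
    _ = _ := Set.ncard_image_of_injective _ (mul_left_injective g)

lemma TallPointsDense.of_patternsOccurIn (hSfin : S.Finite) (hSsym : ∀ s ∈ S, s⁻¹ ∈ S)
    (hSgen : Subgroup.closure S = ⊤) (hz : TallPointsDense (wordDist S) z)
    (hxz : PatternsOccurIn x z) : TallPointsDense (wordDist S) x := by
  intro m hm
  obtain ⟨R, hR, hdense⟩ := hz m hm
  refine ⟨R, hR, fun δ => ?_⟩
  obtain ⟨g, hg⟩ := hxz.exists_agreeOn_ball hSfin hSsym hSgen δ R 0
  obtain ⟨κ, hκ, h, hmh, hκh⟩ := hdense (δ * g)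
  have hball : wordDist S δ (κ * g⁻¹) ≤ R := by rwa [wordDist_mul_inv_right]
  refine ⟨κ * g⁻¹, hball, h, hmh, ?_⟩
  rw [(hg _ hball).1, Lact, inv_mul_cancel_right, hκh]

lemma IsProperCantorLabeling.of_patternsOccurIn
    (hz : IsProperCantorLabeling (wordDist S) fun γ => (z γ).1) (hxz : PatternsOccurIn x z) :
    IsProperCantorLabeling (wordDist S) fun γ => (x γ).1 := by
  intro r hr
  obtain ⟨R, hR, hproper⟩ := hz r hr
  refine ⟨R, hR, fun γ δ hpos hle => ?_⟩
  obtain ⟨g, hg⟩ := hxz {γ, δ} (Set.toFinite _) R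
  obtain ⟨i, hi, hne⟩ := hproper (γ * g) (δ * g) (by rwa [wordDist_mul_right])
    (by rwa [wordDist_mul_right])
  refine ⟨i, hi, ?_⟩
  show (x γ).1 i ≠ (x δ).1 i
  rw [(hg γ (by simp)).2 i hi, (hg δ (by simp)).2 i hi]
  exact hne

lemma IsProperLandscape.of_patternsOccurIn (hSfin : S.Finite) (hSsym : ∀ s ∈ S, s⁻¹ ∈ S)
    (hSgen : Subgroup.closure S = ⊤) (hz : IsProperLandscape (wordDist S) z)
    (hxz : PatternsOccurIn x z) : IsProperLandscape (wordDist S) x :=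
  let ⟨⟨hfin, hlip, hnear, hcluster, hdense⟩, hlabel⟩ := hz
  ⟨⟨hfin.of_patternsOccurIn hxz,
    HeightLipschitz.of_patternsOccurIn hlip hxz,
    HeightOneNear.of_patternsOccurIn hSfin hSsym hSgen hnear hxz,
    HeightOneClustered.of_patternsOccurIn hSfin hSsym hSgen hcluster hxz,
    TallPointsDense.of_patternsOccurIn hSfin hSsym hSgen hdense hxz⟩,
    hlabel.of_patternsOccurIn hxz⟩

end Transfer

lemma window_eq_of_agreeOn {Γ : Type*} [Group Γ] {d : Γ → Γ → ℕ} {m : ℕ}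
    {x z : Γ → CantorHeightSpace} {γ g : Γ}
    (h : AgreeOn ((· * γ) '' {η | d 1 η ≤ m}) m x (Lact g z)) :
    window d m x γ = window d m z (γ * g) := by
  funext η
  unfold window
  split_ifs with hη
  · obtain ⟨hheight, hdigits⟩ := h (η * γ) ⟨η, hη, rfl⟩
    simp only [Lact, mul_assoc] at hheight hdigits
    rw [hheight]
    congr 3 with i
    split_ifs with hi
    exacts [hdigits i hi, rfl]
  · rfl

/-- if `z` is a proper landscape and `B ∈ I_z` is a labeled ball of radius
`m`, then the orbit closure of `z` contains a proper landscape `x'` with `B ∈ K_{x'}`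
(so `B` is never realized as a window of `x'`) and `H(x'(e)) = 1`. -/
theorem stmt19 {Γ : Type*} [Group Γ] (S : Set Γ)
    (hSfin : S.Finite) (hSsym : ∀ s ∈ S, s⁻¹ ∈ S) (hSgen : Subgroup.closure S = ⊤)
    (z : Γ → CantorHeightSpace) (hz : IsProperLandscape (wordDist S) z)
    (m : ℕ) (B : Γ → Option CantorHeightSpace)
    (hB : (m, B) ∈ Iset (wordDist S) z) :
    ∃ x' : Γ → CantorHeightSpace,
      x' ∈ orbitClosure z ∧
      IsProperLandscape (wordDist S) x' ∧
      (m, B) ∈ Kset (wordDist S) x' ∧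
      (x' 1).2 = ((1 : ℕ) : OnePoint ℕ) := by
  have hBJ : (m, B) ∉ Jset (wordDist S) z := fun h => hB (Or.inr h)
  simp only [Jset, Set.mem_ofPred_eq, not_exists, not_forall, exists_prop, not_and] at hBJ
  choose g hg1 hgB using hBJ
  obtain ⟨x', U, hU, hlim, hagree⟩ :=
    hz.1.exists_tendsto_translates hSsym hSgen atTop g hg1
  have hpatterns : PatternsOccurIn x' z := fun T hT n =>
    let ⟨k, hk⟩ := (hagree T hT n).exists
    ⟨g k, hk⟩
  refine ⟨x', mem_closure_of_tendsto hlim (Eventually.of_forall fun k => ⟨g k, rfl⟩),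
    hz.of_patternsOccurIn hSfin hSsym hSgen hpatterns, fun γ hγ => ?_, ?_⟩
  · obtain ⟨k, hk, hkγ⟩ := ((hagree _ ((finite_setOf_wordDist_le hSfin hSsym hSgen 1 m).image
      (· * γ)) m).and (hU (eventually_ge_atTop (wordDist S γ 1)))).exists
    refine hgB k (γ * g k) ?_ ((window_eq_of_agreeOn hk).symm.trans hγ)
    simpa only [one_mul] using (wordDist_mul_right (g k) γ 1).trans_le hkγ
  · obtain ⟨k, hk⟩ := (hagree {1} (Set.finite_singleton 1) 0).exists
    rw [(hk 1 rfl).1, Lact, one_mul, hg1 k]
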